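/- Let φ = v ⊗ z̄₁^{k₁}z̄₂^{k₂}⋯z̄_p^{k_p} ⊗ s be an eigenvector of D_R² of eigenvalue λ² (energy λ²) in L²(ℝ^∞) ⊗ L²(ℝ^∞)*_fin ⊗ S_{ΩT₀,fin}. Then ‖dρ*(zₙ)φ‖ ≤ (|λ|/√(2n))‖φ‖ and ‖dρ*(z̄ₙ)φ‖ ≤ (|λ|/√(2n) + 1)‖φ‖ for every n > 0. -/

import Mathlib

open scoped BigOperators ComplexConjugate

/-- Basis of `L²(ΩT₀,τ)_fin ⊗ S_{ΩT₀,fin} = L²(ℝ^∞)_fin ⊗ L²(ℝ^∞)*_fin ⊗ S_{ΩT₀,fin}`: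
a bosonic monomial, a dual bosonic monomial, and a fermionic wedge monomial. -/
abbrev TripleBasis : Type := (ℕ →₀ ℕ) × (ℕ →₀ ℕ) × Finset ℕ

/-- The space `L²(ΩT₀,τ)_fin ⊗ S_{ΩT₀,fin}`. -/
abbrev HSp : Type := TripleBasis →₀ ℂ

/-- `id ⊗ dρ*(zₙ) ⊗ id` (lowering on the dual Fock factor, with
`‖dρ*(zₙ)(z̄^k)‖² = kₙ‖z̄^k‖²` and `[dρ*(zₙ),dρ*(z̄ₙ)] = −id`). -/
noncomputable def dstarZ (n : ℕ) : HSp →ₗ[ℂ] HSp :=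
  Finsupp.lsum ℂ fun b =>
    LinearMap.toSpanSingleton ℂ HSp
      (((b.2.1 n : ℂ)) • Finsupp.single (b.1, b.2.1 - Finsupp.single n 1, b.2.2) 1)

/-- `id ⊗ dρ*(z̄ₙ) ⊗ id` (raising on the dual Fock factor). -/
noncomputable def dstarZbar (n : ℕ) : HSp →ₗ[ℂ] HSp :=
  Finsupp.lsum ℂ fun b =>
    LinearMap.toSpanSingleton ℂ HSp
      ((-1 : ℂ) • Finsupp.single (b.1, b.2.1 + Finsupp.single n 1, b.2.2) 1)

/-- The Koszul sign of inserting/removing `z̄ₙ` in the wedge monomial `s`. -/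
def ksgn (n : ℕ) (s : Finset ℕ) : ℂ := (-1 : ℂ) ^ (s.filter (· < n)).card

/-- `id ⊗ id ⊗ γ(zₙ)`, with `γ(zₙ) = −√2 (z̄ₙ ⌟ −)`. -/
noncomputable def GammaZ (n : ℕ) : HSp →ₗ[ℂ] HSp :=
  Finsupp.lsum ℂ fun b =>
    LinearMap.toSpanSingleton ℂ HSp
      (if n ∈ b.2.2 then
        ((-(Real.sqrt 2 : ℂ)) * ksgn n b.2.2) •
          Finsupp.single (b.1, b.2.1, b.2.2.erase n) 1
      else 0)

/-- `id ⊗ id ⊗ γ(z̄ₙ)`, with `γ(z̄ₙ) = √2 (z̄ₙ ∧ −)`. -/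
noncomputable def GammaZbar (n : ℕ) : HSp →ₗ[ℂ] HSp :=
  Finsupp.lsum ℂ fun b =>
    LinearMap.toSpanSingleton ℂ HSp
      (if n ∈ b.2.2 then 0
      else ((Real.sqrt 2 : ℂ) * ksgn n b.2.2) •
        Finsupp.single (b.1, b.2.1, insert n b.2.2) 1)

/-- The Dirac operator
`D_R = ∑_{n>0} √n (id ⊗ dρ*(z̄ₙ) ⊗ γ(zₙ) + id ⊗ dρ*(zₙ) ⊗ γ(z̄ₙ))`; the sum is
locally finite (on a basis vector only `n ∈ s` or `n ∈ supp q` contribute). -/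
noncomputable def DiracR : HSp →ₗ[ℂ] HSp :=
  Finsupp.lsum ℂ fun b =>
    LinearMap.toSpanSingleton ℂ HSp
      (∑ n ∈ b.2.1.support ∪ b.2.2, (Real.sqrt n : ℂ) •
        (dstarZbar n (GammaZ n (Finsupp.single b 1)) +
          dstarZ n (GammaZbar n (Finsupp.single b 1))))

/-- `id ⊗ id ⊗ N`, the fermionic number operator (eigenvalue `∑_{j∈s} j`). -/
noncomputable def NopH : HSp →ₗ[ℂ] HSp :=
  Finsupp.lsum ℂ fun b =>
    LinearMap.toSpanSingleton ℂ HSp (((∑ j ∈ b.2.2, j : ℕ) : ℂ) • Finsupp.single b 1)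

/-- `id ⊗ (dρ*(d)/i) ⊗ id`, the bosonic energy operator (eigenvalue `∑ⱼ j kⱼ`). -/
noncomputable def EopH : HSp →ₗ[ℂ] HSp :=
  Finsupp.lsum ℂ fun b =>
    LinearMap.toSpanSingleton ℂ HSp
      (((∑ j ∈ b.2.1.support, j * b.2.1 j : ℕ) : ℂ) • Finsupp.single b 1)

/-- The weight of a basis vector (its squared norm): `∏ kⱼ! · ∏ lⱼ! · 1`. -/
def wt (b : TripleBasis) : ℕ :=
  (∏ j ∈ b.1.support, (b.1 j).factorial) * (∏ j ∈ b.2.1.support, (b.2.1 j).factorial)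

/-- The inner product on `L²(ΩT₀,τ)_fin ⊗ S_{ΩT₀,fin}`. -/
noncomputable def innH (φ ψ : HSp) : ℂ :=
  ∑ b ∈ φ.support ∪ ψ.support, (wt b : ℂ) * conj (φ b) * ψ b

/-- The norm on `L²(ΩT₀,τ)_fin ⊗ S_{ΩT₀,fin}`. -/
noncomputable def normH (φ : HSp) : ℝ := Real.sqrt (innH φ φ).re

/-!
On a basis vector `x = (p, q, s)` the `m`-th summand of `D_R` is a multiple of a single basis
vector, obtained by moving the mode `m` from `s` to `q` or back; it never changes `p`. Hence the
diagonal entry of `D_R²` at `x` only collects the round trips `x → x' → x`, each contributing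
`2m (qₘ + [m ∈ s])`, and on `φ = v ⊗ z̄^q ⊗ s` the eigenvalue equation forces
`λ² = 2 (∑_{j ∈ s} j + ∑ⱼ j qⱼ) ≥ 2n qₙ`. On the other side, `dρ*(zₙ)` and `dρ*(z̄ₙ)` merely
relabel the basis vectors of such a `φ` while rescaling all weights `∏ qⱼ!` by the same factor, so
`‖dρ*(zₙ)φ‖² = qₙ ‖φ‖²` and `‖dρ*(z̄ₙ)φ‖² = (qₙ + 1) ‖φ‖²`.
-/

theorem Finsupp.lsum_toSpanSingleton_single {α R M : Type*} [CommSemiring R] [AddCommMonoid M]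
    [Module R M] (v : α → M) (a : α) :
    lsum R (fun b => LinearMap.toSpanSingleton R M (v b)) (single a 1) = v a := by
  simp

theorem LinearMap.finsupp_apply_eq_sum {α β R : Type*} [CommSemiring R]
    (T : (α →₀ R) →ₗ[R] β →₀ R) (ψ : α →₀ R) (y : β) :
    T ψ y = ∑ z ∈ ψ.support, ψ z * T (Finsupp.single z 1) y := by
  conv_lhs => rw [← ψ.sum_single]
  simp only [Finsupp.sum, map_sum, Finsupp.finsetSum_apply]
  refine Finset.sum_congr rfl fun z _ => ?_
  rw [← smul_eq_mul, ← Finsupp.smul_apply, ← map_smul, Finsupp.smul_single_one]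

theorem Finsupp.prod_factorial_add_single (k : ℕ →₀ ℕ) (n : ℕ) :
    ∏ j ∈ (k + single n 1).support, ((k + single n 1 : ℕ →₀ ℕ) j).factorial
      = (k n + 1) * ∏ j ∈ k.support, (k j).factorial := by
  change (k + single n 1).prod (fun _ a => a.factorial) = (k n + 1) * k.prod fun _ a => a.factorial
  rw [← mul_prod_erase' _ n _ fun _ => rfl, ← mul_prod_erase' k n _ fun _ => rfl, erase_add,
    erase_single, add_zero, add_apply, single_eq_same, Nat.factorial_succ, mul_assoc]

theorem Finsupp.mul_apply_le_sum_mul (q : ℕ →₀ ℕ) (n : ℕ) : n * q n ≤ ∑ j ∈ q.support, j * q j := by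
  by_cases hqn : q n = 0
  · simp [hqn]
  · exact Finset.single_le_sum (f := fun j => j * q j) (fun _ _ => Nat.zero_le _)
      (Finsupp.mem_support_iff.mpr hqn)

theorem Real.sqrt_add_one_le (x : ℝ) (hx : 0 ≤ x) : √(x + 1) ≤ √x + 1 :=
  Real.sqrt_le_iff.mpr ⟨by positivity, by nlinarith [Real.sq_sqrt hx, Real.sqrt_nonneg x]⟩

noncomputable def raiseDual (n : ℕ) (b : TripleBasis) : TripleBasis :=
  (b.1, b.2.1 + Finsupp.single n 1, b.2.2)

noncomputable def lowerDual (n : ℕ) (b : TripleBasis) : TripleBasis :=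
  (b.1, b.2.1 - Finsupp.single n 1, b.2.2)

theorem wt_raiseDual (n : ℕ) (b : TripleBasis) : wt (raiseDual n b) = (b.2.1 n + 1) * wt b := by
  rw [wt, wt, raiseDual, Finsupp.prod_factorial_add_single]
  ring

theorem raiseDual_lowerDual {n : ℕ} {b : TripleBasis} (h : b.2.1 n ≠ 0) :
    raiseDual n (lowerDual n b) = b := by
  have : Finsupp.single n 1 ≤ b.2.1 := Finsupp.single_le_iff.mpr (Nat.one_le_iff_ne_zero.mpr h)
  simp [raiseDual, lowerDual, tsub_add_cancel_of_le this]

theorem mul_wt_lowerDual {n : ℕ} {b : TripleBasis} (h : b.2.1 n ≠ 0) :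
    b.2.1 n * wt (lowerDual n b) = wt b := by
  conv_rhs => rw [← raiseDual_lowerDual h, wt_raiseDual]
  congr 1
  simp only [lowerDual, Finsupp.tsub_apply, Finsupp.single_eq_same]
  omega

theorem innH_self (φ : HSp) :
    innH φ φ = ((∑ b ∈ φ.support, (wt b : ℝ) * Complex.normSq (φ b) : ℝ) : ℂ) := by
  rw [innH, Finset.union_self]
  push_cast
  refine Finset.sum_congr rfl fun b _ => ?_
  rw [mul_assoc, Complex.normSq_eq_conj_mul_self]

theorem normH_eq_sqrt_sum (φ : HSp) :
    normH φ = √(∑ b ∈ φ.support, (wt b : ℝ) * Complex.normSq (φ b)) := by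
  rw [normH, innH_self, Complex.ofReal_re]

theorem normH_nonneg (φ : HSp) : 0 ≤ normH φ := Real.sqrt_nonneg _

@[simp]
theorem normH_zero : normH 0 = 0 := by
  simp [normH_eq_sqrt_sum]

theorem normH_smul_mapDomain {f : TripleBasis → TripleBasis} {φ : HSp}
    (hf : Set.InjOn f φ.support) (c : ℂ) (r : ℝ)
    (hwt : ∀ b ∈ φ.support, Complex.normSq c * wt (f b) = r * wt b) :
    normH (c • Finsupp.mapDomain f φ) = √r * normH φ := by
  classical
  have hsupp : (c • Finsupp.mapDomain f φ).support ⊆ φ.support.image f :=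
    Finsupp.support_smul.trans Finsupp.mapDomain_support
  have happly : ∀ b ∈ φ.support, (c • Finsupp.mapDomain f φ) (f b) = c * φ b := fun b hb => by
    rw [Finsupp.smul_apply, Finsupp.mapDomain_apply' _ _ subset_rfl hf hb, smul_eq_mul]
  rw [normH_eq_sqrt_sum, normH_eq_sqrt_sum, Finset.sum_subset hsupp fun x _ hx => by
      rw [Finsupp.notMem_support_iff.mp hx, map_zero, mul_zero],
    Finset.sum_image hf, ← Real.sqrt_mul' _ (Finset.sum_nonneg fun b _ =>
      mul_nonneg (Nat.cast_nonneg _) (Complex.normSq_nonneg _)),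
    Finset.mul_sum]
  congr 1
  refine Finset.sum_congr rfl fun b hb => ?_
  rw [happly b hb, Complex.normSq_mul, ← mul_assoc, ← mul_assoc, ← hwt b hb]
  ring

theorem dstarZbar_apply (n : ℕ) (φ : HSp) :
    dstarZbar n φ = (-1 : ℂ) • Finsupp.mapDomain (raiseDual n) φ := by
  rw [dstarZbar, Finsupp.lsum_apply, Finsupp.mapDomain, Finsupp.smul_sum]
  refine Finsupp.sum_congr fun b _ => ?_
  simp [raiseDual, Finsupp.smul_single]

theorem dstarZ_apply_of_dual_eq {q : ℕ →₀ ℕ} {φ : HSp} (hq : ∀ b ∈ φ.support, b.2.1 = q)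
    (n : ℕ) : dstarZ n φ = (q n : ℂ) • Finsupp.mapDomain (lowerDual n) φ := by
  rw [dstarZ, Finsupp.lsum_apply, Finsupp.mapDomain, Finsupp.smul_sum]
  refine Finsupp.sum_congr fun b hb => ?_
  simp [lowerDual, Finsupp.smul_single, hq b hb, mul_comm]

theorem normH_dstarZbar {q : ℕ →₀ ℕ} {φ : HSp} (hq : ∀ b ∈ φ.support, b.2.1 = q) (n : ℕ) :
    normH (dstarZbar n φ) = √(q n + 1) * normH φ := by
  rw [dstarZbar_apply]
  refine normH_smul_mapDomain ?_ _ _ fun b hb => ?_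
  · intro x _ y _ hxy
    simpa [raiseDual, Prod.ext_iff] using hxy
  · rw [wt_raiseDual, hq b hb]
    simp

theorem normH_dstarZ {q : ℕ →₀ ℕ} {φ : HSp} (hq : ∀ b ∈ φ.support, b.2.1 = q) (n : ℕ) :
    normH (dstarZ n φ) = √(q n) * normH φ := by
  rw [dstarZ_apply_of_dual_eq hq]
  refine normH_smul_mapDomain ?_ _ _ fun b hb => ?_
  · intro x hx y hy hxy
    simp only [lowerDual, Prod.mk.injEq] at hxy
    exact Prod.ext hxy.1 (Prod.ext ((hq x hx).trans (hq y hy).symm) hxy.2.2)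
  · rw [← hq b hb]
    rcases eq_or_ne (b.2.1 n) 0 with h | h
    · simp [h]
    · rw [← mul_wt_lowerDual h]
      simp only [Complex.normSq_natCast, Nat.cast_mul]
      ring

theorem ksgn_erase (n : ℕ) (s : Finset ℕ) : ksgn n (s.erase n) = ksgn n s := by
  rw [ksgn, ksgn, Finset.filter_erase, Finset.erase_eq_of_notMem (by simp)]

theorem ksgn_insert (n : ℕ) (s : Finset ℕ) : ksgn n (insert n s) = ksgn n s := by
  rw [ksgn, ksgn, Finset.filter_insert, if_neg (lt_irrefl n)]

-- When `m ∉ x.2.2` and `x.2.1 m = 0` the subtraction truncates, but then `diracCoeff m x = 0`.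
noncomputable def diracTarget (m : ℕ) (x : TripleBasis) : TripleBasis :=
  if m ∈ x.2.2 then (x.1, x.2.1 + Finsupp.single m 1, x.2.2.erase m)
  else (x.1, x.2.1 - Finsupp.single m 1, insert m x.2.2)

noncomputable def diracCoeff (m : ℕ) (x : TripleBasis) : ℂ :=
  Real.sqrt m * Real.sqrt 2 * ksgn m x.2.2 * if m ∈ x.2.2 then 1 else (x.2.1 m : ℂ)

theorem DiracR_single (x : TripleBasis) :
    DiracR (Finsupp.single x 1)
      = ∑ m ∈ x.2.1.support ∪ x.2.2, diracCoeff m x • Finsupp.single (diracTarget m x) 1 := by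
  rw [DiracR, Finsupp.lsum_toSpanSingleton_single]
  refine Finset.sum_congr rfl fun m _ => ?_
  simp only [GammaZ, GammaZbar, Finsupp.lsum_toSpanSingleton_single, diracCoeff, diracTarget]
  split_ifs
  · rw [map_smul, map_zero, add_zero, dstarZbar, Finsupp.lsum_toSpanSingleton_single, smul_smul,
      smul_smul]
    congr 1
    ring
  · rw [map_smul, map_zero, zero_add, dstarZ, Finsupp.lsum_toSpanSingleton_single, smul_smul,
      smul_smul]
    congr 1
    push_cast
    ring

theorem diracTarget_fst (m : ℕ) (x : TripleBasis) : (diracTarget m x).1 = x.1 := by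
  unfold diracTarget
  split_ifs <;> rfl

theorem mem_diracTarget_snd_snd {m k : ℕ} {x : TripleBasis} :
    k ∈ (diracTarget m x).2.2 ↔ (k ∈ x.2.2 ↔ k ≠ m) := by
  unfold diracTarget
  split_ifs <;> simp only [Finset.mem_erase, Finset.mem_insert] <;> grind

theorem diracTarget_diracTarget_ne {m m' : ℕ} (h : m' ≠ m) (x : TripleBasis) :
    diracTarget m' (diracTarget m x) ≠ x := fun hx => by
  have := (congrArg (m ∈ ·.2.2) hx).to_iff
  simp only [mem_diracTarget_snd_snd] at this
  grind

theorem diracTarget_diracTarget_self {m : ℕ} {x : TripleBasis} (h : m ∈ x.2.2 ∨ x.2.1 m ≠ 0) :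
    diracTarget m (diracTarget m x) = x := by
  obtain ⟨p, q, s⟩ := x
  by_cases hm : m ∈ s
  · simp [diracTarget, hm, Finset.insert_erase]
  · have hle : Finsupp.single m 1 ≤ q :=
      Finsupp.single_le_iff.mpr (Nat.one_le_iff_ne_zero.mpr (h.resolve_left hm))
    simp [diracTarget, hm, tsub_add_cancel_of_le hle]

theorem diracCoeff_eq_zero {m : ℕ} {x : TripleBasis} (h : m ∉ x.2.1.support ∪ x.2.2) :
    diracCoeff m x = 0 := by
  simp only [Finset.mem_union, Finsupp.mem_support_iff, not_or, not_not] at h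
  simp [diracCoeff, h.1, h.2]

theorem diracCoeff_diracTarget_mul_diracCoeff (m : ℕ) (x : TripleBasis) :
    diracCoeff m (diracTarget m x) * diracCoeff m x
      = 2 * m * (x.2.1 m + if m ∈ x.2.2 then 1 else 0) := by
  have hsqrt : ∀ a : ℝ, 0 ≤ a → (Real.sqrt a : ℂ) * Real.sqrt a = a := fun a ha => by
    rw [← Complex.ofReal_mul, Real.mul_self_sqrt ha]
  have hksgn : ksgn m x.2.2 * ksgn m x.2.2 = 1 := by
    rw [ksgn, ← mul_pow]
    norm_num
  have key : (Real.sqrt m * Real.sqrt 2 * ksgn m x.2.2 : ℂ) ^ 2 = 2 * m := by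
    rw [mul_pow, mul_pow, sq, sq, sq, hsqrt _ (Nat.cast_nonneg m), hsqrt 2 zero_le_two, hksgn]
    push_cast
    ring
  obtain ⟨p, q, s⟩ := x
  by_cases hm : m ∈ s
  · simp only [diracCoeff, diracTarget, hm, if_true, Finset.notMem_erase, if_false,
      Finsupp.add_apply, Finsupp.single_eq_same, Nat.cast_succ, ksgn_erase]
    linear_combination ((q m : ℂ) + 1) * key
  · simp only [diracCoeff, diracTarget, hm, if_true, Finset.mem_insert_self, if_false,
      ksgn_insert]
    linear_combination (q m : ℂ) * key

theorem DiracR_single_apply (x y : TripleBasis) :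
    DiracR (Finsupp.single x 1) y
      = ∑ m ∈ x.2.1.support ∪ x.2.2, if diracTarget m x = y then diracCoeff m x else 0 := by
  classical
  simp [DiracR_single, Finsupp.finsetSum_apply, Finsupp.single_apply]

theorem DiracR_single_apply_of_fst_ne {x y : TripleBasis} (h : y.1 ≠ x.1) :
    DiracR (Finsupp.single x 1) y = 0 := by
  rw [DiracR_single_apply]
  exact Finset.sum_eq_zero fun m _ => if_neg fun hm => h (by rw [← hm, diracTarget_fst])

theorem DiracR_sq_single_apply_of_fst_ne {x y : TripleBasis} (h : y.1 ≠ x.1) :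
    DiracR (DiracR (Finsupp.single x 1)) y = 0 := by
  rw [LinearMap.finsupp_apply_eq_sum]
  refine Finset.sum_eq_zero fun z hz => ?_
  have hzx : z.1 = x.1 := by
    by_contra hne
    exact Finsupp.mem_support_iff.mp hz (DiracR_single_apply_of_fst_ne hne)
  rw [DiracR_single_apply_of_fst_ne (show y.1 ≠ z.1 by rwa [hzx]), mul_zero]

theorem DiracR_single_diracTarget_apply_self_mul (m : ℕ) (x : TripleBasis) :
    DiracR (Finsupp.single (diracTarget m x) 1) x * diracCoeff m x
      = 2 * m * (x.2.1 m + if m ∈ x.2.2 then 1 else 0) := by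
  rw [← diracCoeff_diracTarget_mul_diracCoeff]
  by_cases h : m ∈ x.2.2 ∨ x.2.1 m ≠ 0
  · congr 1
    rw [DiracR_single_apply, Finset.sum_eq_single m
      (fun m' _ hm' => if_neg (diracTarget_diracTarget_ne hm' x))
      (fun hm => by rw [diracCoeff_eq_zero hm, ite_self]), if_pos (diracTarget_diracTarget_self h)]
  · rw [diracCoeff_eq_zero (by simpa [not_or, and_comm] using h), mul_zero, mul_zero]

theorem DiracR_sq_single_apply_self (x : TripleBasis) :
    DiracR (DiracR (Finsupp.single x 1)) x
      = 2 * ((∑ j ∈ x.2.2, j : ℕ) + (∑ j ∈ x.2.1.support, j * x.2.1 j : ℕ)) := by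
  classical
  rw [DiracR_single x, map_sum, Finsupp.finsetSum_apply]
  simp only [map_smul, Finsupp.smul_apply, smul_eq_mul, mul_comm (diracCoeff _ x),
    DiracR_single_diracTarget_apply_self_mul, mul_add, Finset.sum_add_distrib, mul_ite, mul_one,
    mul_zero, Finset.sum_ite_mem, Finset.union_inter_cancel_right]
  rw [← Finset.sum_subset Finset.subset_union_left fun m _ hm => by
    rw [Finsupp.notMem_support_iff.mp hm, Nat.cast_zero, mul_zero]]
  push_cast
  rw [Finset.mul_sum, Finset.mul_sum, add_comm]
  congr 1
  exact Finset.sum_congr rfl fun _ _ => by ring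

theorem sq_eq_two_mul_energy {q : ℕ →₀ ℕ} {s : Finset ℕ} {φ : HSp}
    (hφ : ∀ b : TripleBasis, φ b ≠ 0 → b.2.1 = q ∧ b.2.2 = s) {lam : ℝ}
    (hlam : DiracR (DiracR φ) = ((lam ^ 2 : ℝ) : ℂ) • φ) {b : TripleBasis} (hb : φ b ≠ 0) :
    lam ^ 2 = 2 * ((∑ j ∈ s, j : ℕ) + (∑ j ∈ q.support, j * q j : ℕ)) := by
  have heig := congrArg (· b) hlam
  simp only [Finsupp.smul_apply, smul_eq_mul] at heig
  rw [← LinearMap.comp_apply, LinearMap.finsupp_apply_eq_sum,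
    Finset.sum_eq_single_of_mem b (Finsupp.mem_support_iff.mpr hb) fun x hx hxb => ?off_diag,
    LinearMap.comp_apply, DiracR_sq_single_apply_self, (hφ b hb).1, (hφ b hb).2, mul_comm] at heig
  case off_diag =>
    obtain ⟨hxq, hxs⟩ := hφ x (Finsupp.mem_support_iff.mp hx)
    obtain ⟨hbq, hbs⟩ := hφ b hb
    have hfst : b.1 ≠ x.1 := fun h => hxb (Prod.ext h.symm (Prod.ext (hxq.trans hbq.symm)
      (hxs.trans hbs.symm)))
    rw [LinearMap.comp_apply, DiracR_sq_single_apply_of_fst_ne hfst, mul_zero]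
  exact_mod_cast (mul_right_cancel₀ hb heig).symm

/-- if `φ = v ⊗ z̄₁^{k₁}⋯z̄_p^{k_p} ⊗ s` is an eigenvector of `D_R²`
of eigenvalue (energy) `λ²`, then `‖dρ*(zₙ)φ‖ ≤ (|λ|/√(2n))‖φ‖` and
`‖dρ*(z̄ₙ)φ‖ ≤ (|λ|/√(2n) + 1)‖φ‖` for every `n > 0`. -/
theorem stmt15 (q : ℕ →₀ ℕ) (s : Finset ℕ) (φ : HSp)
    -- `φ` has fixed dual-Fock monomial `q` and fixed fermionic monomial `s`
    -- (i.e. `φ = v ⊗ z̄^q ⊗ s` for some bosonic vector `v`):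
    (hφ : ∀ b : TripleBasis, φ b ≠ 0 → b.2.1 = q ∧ b.2.2 = s)
    (lam : ℝ)
    -- `φ` is an eigenvector of `D_R²` at energy `λ²`:
    (hlam : DiracR (DiracR φ) = ((lam ^ 2 : ℝ) : ℂ) • φ)
    (n : ℕ) (hn : 0 < n) :
    normH (dstarZ n φ) ≤ (|lam| / Real.sqrt (2 * n)) * normH φ ∧
    normH (dstarZbar n φ) ≤ (|lam| / Real.sqrt (2 * n) + 1) * normH φ := by
  obtain rfl | ⟨b, hb⟩ : φ = 0 ∨ ∃ b, φ b ≠ 0 := by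
    by_contra! h
    exact h.1 (Finsupp.ext h.2)
  · simp
  have hq : ∀ b ∈ φ.support, b.2.1 = q := fun b hb => (hφ b (Finsupp.mem_support_iff.mp hb)).1
  have henergy : 2 * n * q n ≤ lam ^ 2 := by
    rw [sq_eq_two_mul_energy hφ hlam hb, mul_assoc]
    gcongr
    exact_mod_cast (q.mul_apply_le_sum_mul n).trans (Nat.le_add_left _ _)
  have hsqrt : √(q n) ≤ |lam| / √(2 * n) := by
    rw [le_div_iff₀ (Real.sqrt_pos.mpr (by positivity)), ← Real.sqrt_mul (Nat.cast_nonneg _),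
      ← Real.sqrt_sq_eq_abs]
    exact Real.sqrt_le_sqrt (by linarith)
  rw [normH_dstarZ hq, normH_dstarZbar hq]
  refine ⟨mul_le_mul_of_nonneg_right hsqrt (normH_nonneg φ),
    mul_le_mul_of_nonneg_right ?_ (normH_nonneg φ)⟩
  linarith [Real.sqrt_add_one_le (q n) (Nat.cast_nonneg _)]
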